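/- Let g ≥ 2 and let G be the surface group with the symmetric presentation. Let U = u_1⋯u_l and V = v_1⋯v_m be nonempty irreducible words over S^±. Then no contiguous subword of the concatenation U·V that contains both of the letters u_l and v_1 is an element of R; equivalently, every fractional-relator subword of U·V containing the two-letter junction u_l v_1 has length at most 4g − 1. -/

import Mathlib

namespace Surface

/-- Letters: `(i, true)` is the generator `c_{i+1}`, `(i, false)` is its inverse. -/
abbrev Letter (g : ℕ) := Fin (2 * g) × Bool

/-- Words over the alphabet `S^±`. -/
abbrev Word (g : ℕ) := List (Letter g)

/-- The inverse of a letter. -/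
def invLetter {g : ℕ} (a : Letter g) : Letter g := (a.1, !a.2)

/-- The formal inverse of a word: reverse it and invert every letter. -/
def invWord {g : ℕ} (w : Word g) : Word g := (w.map invLetter).reverse

/-- The relator `c₁ ⋯ c_{2g} · c₁⁻¹ ⋯ c_{2g}⁻¹` of the symmetric presentation. -/
def relator (g : ℕ) : FreeGroup (Fin (2 * g)) :=
  (List.ofFn fun i : Fin (2 * g) => FreeGroup.of i).prod *
    (List.ofFn fun i : Fin (2 * g) => (FreeGroup.of i)⁻¹).prod

/-- The surface group with the symmetric presentation
`⟨c₁, …, c_{2g} ∣ c₁ ⋯ c_{2g} c₁⁻¹ ⋯ c_{2g}⁻¹⟩`. -/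
abbrev SurfaceGroup (g : ℕ) : Type :=
  PresentedGroup ({relator g} : Set (FreeGroup (Fin (2 * g))))

/-- The element of the surface group represented by a letter. -/
def letterElt {g : ℕ} (a : Letter g) : SurfaceGroup g :=
  if a.2 then PresentedGroup.of a.1 else (PresentedGroup.of a.1)⁻¹

/-- The element of the surface group represented by a word. -/
def eval {g : ℕ} (w : Word g) : SurfaceGroup g := (w.map letterElt).prod

/-- The word length of an element: the least `n` such that the element is a product of
`n` elements of `S^±`, i.e. is represented by a word of length `n`. -/
noncomputable def wordLength {g : ℕ} (x : SurfaceGroup g) : ℕ :=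
  sInf {n : ℕ | ∃ w : Word g, w.length = n ∧ eval w = x}

/-- Rank of letters, realizing the order
`c_{2g} ≺ ⋯ ≺ c₂ ≺ c₁ ≺ c₁⁻¹ ≺ c₂⁻¹ ≺ ⋯ ≺ c_{2g}⁻¹`. -/
def rank {g : ℕ} (a : Letter g) : ℕ :=
  if a.2 then 2 * g - 1 - (a.1 : ℕ) else 2 * g + (a.1 : ℕ)

/-- The strict order `≺` on letters. -/
def letterLt {g : ℕ} (a b : Letter g) : Prop := rank a < rank b

/-- The strict length-lexicographical order on words. -/
def wordLt {g : ℕ} (w₁ w₂ : Word g) : Prop :=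
  w₁.length < w₂.length ∨ (w₁.length = w₂.length ∧ List.Lex letterLt w₁ w₂)

/-- The (non-strict) length-lexicographical order on words. -/
def wordLe {g : ℕ} (w₁ w₂ : Word g) : Prop := w₁ = w₂ ∨ wordLt w₁ w₂

/-- `w` is the length-lexicographically least word representing `x`, i.e. `w` is the
normal form `nf(x)` of `x`. -/
def IsNormalForm {g : ℕ} (x : SurfaceGroup g) (w : Word g) : Prop :=
  eval w = x ∧ ∀ w' : Word g, eval w' = x → wordLe w w'

/-- A word is irreducible if it is the normal form of the element it represents. -/
def Irred {g : ℕ} (w : Word g) : Prop := IsNormalForm (eval w) w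

/-- A word is freely reduced if no letter is immediately followed by its inverse. -/
def FreelyReduced {g : ℕ} (w : Word g) : Prop :=
  List.Chain' (fun a b => b ≠ invLetter a) w

/-- A word is cyclically freely reduced if it is freely reduced and moreover its first
letter is not the inverse of its last letter. -/
def CyclicallyFreelyReduced {g : ℕ} (w : Word g) : Prop :=
  FreelyReduced w ∧
    ∀ a b : Letter g, w.head? = some a → w.getLast? = some b → a ≠ invLetter b

/-- The `n`-fold concatenation of a word with itself. -/
def wpow {g : ℕ} (w : Word g) : ℕ → Word g
  | 0 => []
  | n + 1 => w ++ wpow w n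

/-- The contiguous segment of `w` of length `len` starting at (0-indexed) position `a`. -/
def seg {g : ℕ} (w : Word g) (a len : ℕ) : Word g := (w.drop a).take len

/-- The relator as a word. -/
def relWord (g : ℕ) : Word g :=
  (List.ofFn fun i : Fin (2 * g) => ((i, true) : Letter g)) ++
    List.ofFn fun i : Fin (2 * g) => ((i, false) : Letter g)

/-- The set `R` of all cyclic permutations of the relator word and of its formal
inverse word. -/
def RSet (g : ℕ) : Set (Word g) :=
  {w | List.IsRotated w (relWord g) ∨ List.IsRotated w (invWord (relWord g))}

/-- Words of type `S_(1)`: `b b⁻¹` for a letter `b`. -/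
def TypeS1 {g : ℕ} (v : Word g) : Prop := ∃ a : Letter g, v = [a, invLetter a]

/-- Words of type `S_(2,k)`: the prefix of length `k` of some `b₁ ⋯ b_{4g} ∈ R`. -/
def TypeS2 {g : ℕ} (k : ℕ) (v : Word g) : Prop := ∃ r ∈ RSet g, v = r.take k

/-- Words of type `S_(3,t)`: `b₁ (b₂ ⋯ b_{2g})^t b_{2g+1}` for some `b₁ ⋯ b_{4g} ∈ R`. -/
def TypeS3 {g : ℕ} (t : ℕ) (v : Word g) : Prop :=
  ∃ r ∈ RSet g, v = r.take 1 ++ wpow (seg r 1 (2 * g - 1)) t ++ seg r (2 * g) 1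

/-- Words of type `S_(4,t)`: `b₁ (b₂ ⋯ b_{2g})^t` or `(b₁ ⋯ b_{2g-1})^t b_{2g}` for some
`b₁ ⋯ b_{4g} ∈ R` with `b₁ ≻ b_{2g}`. -/
def TypeS4 {g : ℕ} (t : ℕ) (v : Word g) : Prop :=
  ∃ r ∈ RSet g, ∃ b₁ bm : Letter g,
    r.take 1 = [b₁] ∧ seg r (2 * g - 1) 1 = [bm] ∧ letterLt bm b₁ ∧
      (v = r.take 1 ++ wpow (seg r 1 (2 * g - 1)) t ∨
        v = wpow (r.take (2 * g - 1)) t ++ seg r (2 * g - 1) 1)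

/-- A fractional relator: a word of length at least `2` occurring as a contiguous
subword of some element of `R`. -/
def IsFracRel {g : ℕ} (v : Word g) : Prop := 2 ≤ v.length ∧ ∃ r ∈ RSet g, v <:+: r

/-- The segment of `W` of length `len` starting at position `a` is a locally longest
fractional relator (LLFR) of `W`: it is a fractional relator, and neither its one-letter
extension to the left within `W` nor to the right within `W` is a fractional relator. -/
def IsLLFRAt {g : ℕ} (W : Word g) (a len : ℕ) : Prop :=
  a + len ≤ W.length ∧ IsFracRel (seg W a len) ∧
    (a = 0 ∨ ¬IsFracRel (seg W (a - 1) (len + 1))) ∧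
    (a + len = W.length ∨ ¬IsFracRel (seg W a (len + 1)))

/-- The splitting condition entering the definition of the reducing-subword pair:
`W₁ = A ++ C₁`, `W₂ = C₂ ++ B` and `nf(W₁ W₂) = A ++ C' ++ B` for some `C'`. -/
def SplitCond {g : ℕ} (W₁ W₂ C₁ C₂ : Word g) : Prop :=
  ∃ A B C' : Word g, W₁ = A ++ C₁ ∧ W₂ = C₂ ++ B ∧
    IsNormalForm (eval (W₁ ++ W₂)) (A ++ C' ++ B)

/-- The lexicographic order on pairs of words induced by the length-lexicographical
order on words. -/
def pairLe {g : ℕ} (p q : Word g × Word g) : Prop :=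
  wordLt p.1 q.1 ∨ (p.1 = q.1 ∧ wordLe p.2 q.2)

/-- `(C₁, C₂)` is the reducing-subword pair `rp(W₁, W₂)`: the least pair satisfying the
splitting condition. -/
def IsRP {g : ℕ} (W₁ W₂ C₁ C₂ : Word g) : Prop :=
  SplitCond W₁ W₂ C₁ C₂ ∧
    ∀ C₁' C₂' : Word g, SplitCond W₁ W₂ C₁' C₂' → pairLe (C₁, C₂) (C₁', C₂')

/-!
Suppose `X ++ Y ∈ R` with `X`, `Y` nonempty and irreducible. As `XY = 1`, the formal inverse
of either word represents the other, so irreducibility forces `|X| = |Y| = 2g`. Every element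
of `R` has the shape `A · A'`, where `A'` inverts the letters of `A` in place and the letters of
`A` involve pairwise distinct generators; hence `X = x₁ ⋯ x_{2g}` and `Y = x₁⁻¹ ⋯ x_{2g}⁻¹`.
Then `x_{2g} ⋯ x₁` represents `X` and `x_{2g}⁻¹ ⋯ x₁⁻¹` represents `Y`, and comparing first
letters gives `x₁ ≼ x_{2g}` and `x₁⁻¹ ≼ x_{2g}⁻¹`. Inversion reverses `≺`, so `x₁ = x_{2g}`,
contradicting distinctness.
-/

section Words

variable {g : ℕ}

@[simp]
lemma eval_nil : eval ([] : Word g) = 1 := rfl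

@[simp]
lemma eval_cons (a : Letter g) (w : Word g) : eval (a :: w) = letterElt a * eval w := by
  simp [eval]

@[simp]
lemma eval_append (w₁ w₂ : Word g) : eval (w₁ ++ w₂) = eval w₁ * eval w₂ := by
  simp [eval]

lemma invLetter_involutive : Function.Involutive (invLetter (g := g)) := fun a => by
  simp [invLetter]

@[simp]
lemma invLetter_comp_invLetter : invLetter ∘ invLetter = (id : Letter g → Letter g) :=
  invLetter_involutive.comp_self

@[simp]
lemma invLetter_invLetter (a : Letter g) : invLetter (invLetter a) = a :=
  invLetter_involutive a

lemma invWord_map_invLetter (w : Word g) : invWord (w.map invLetter) = w.reverse := by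
  simp [invWord]

lemma invWord_cons (a : Letter g) (w : Word g) :
    invWord (a :: w) = invWord w ++ [invLetter a] := by
  simp [invWord]

lemma letterElt_invLetter (a : Letter g) : letterElt (invLetter a) = (letterElt a)⁻¹ := by
  obtain ⟨i, _ | _⟩ := a <;> simp [letterElt, invLetter]

lemma eval_invWord (w : Word g) : eval (invWord w) = (eval w)⁻¹ := by
  induction w with
  | nil => rfl
  | cons a w ih => simp [invWord_cons, ih, letterElt_invLetter]

lemma eval_relWord : eval (relWord g) = 1 := by
  have hmk : eval (relWord g) = PresentedGroup.mk {relator g} (relator g) := by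
    conv_rhs => arg 2; rw [relator]
    simp [eval, relWord, letterElt, map_list_prod, List.map_ofFn, Function.comp_def,
      PresentedGroup.of]
  exact hmk.trans (PresentedGroup.one_of_mem (Set.mem_singleton _))

lemma eval_rotate_eq_one {w : Word g} (hw : eval w = 1) (n : ℕ) : eval (w.rotate n) = 1 := by
  rw [List.rotate_eq_drop_append_take_mod, eval_append, mul_eq_one_comm, ← eval_append,
    List.take_append_drop, hw]

lemma eval_eq_one_of_mem_RSet {r : Word g} (hr : r ∈ RSet g) : eval r = 1 := by
  rcases hr with h | h <;> obtain ⟨n, rfl⟩ := h.symm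
  · exact eval_rotate_eq_one eval_relWord n
  · exact eval_rotate_eq_one (by rw [eval_invWord, eval_relWord, inv_one]) n

lemma length_of_mem_RSet {r : Word g} (hr : r ∈ RSet g) : r.length = 4 * g := by
  have : (relWord g).length = 4 * g := by
    simp only [relWord, List.length_append, List.length_ofFn]
    omega
  rcases hr with h | h <;> rw [h.perm.length_eq] <;> simpa [invWord]

lemma IsFracRel.length_le_of_notMem_RSet {w : Word g} (hw : IsFracRel w) (hR : w ∉ RSet g) :
    w.length ≤ 4 * g - 1 := by
  obtain ⟨-, r, hr, hwr⟩ := hw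
  have hlen := length_of_mem_RSet hr
  have hle := hwr.length_le
  by_contra hlong
  exact hR (hwr.eq_of_length (by omega) ▸ hr)

end Words

section Doubled

variable {g : ℕ}

def IsDoubled (r : Word g) : Prop :=
  ∃ A : Word g, (A.map Prod.fst).Nodup ∧ r = A ++ A.map invLetter

lemma isDoubled_relWord : IsDoubled (relWord g) := by
  refine ⟨List.ofFn fun i => (i, true), ?_, ?_⟩
  · simpa [List.map_ofFn, Function.comp_def] using List.nodup_ofFn_ofInjective fun _ _ h => h
  · simp [relWord, List.map_ofFn, Function.comp_def, invLetter]

lemma IsDoubled.invWord {r : Word g} (h : IsDoubled r) : IsDoubled (invWord r) := by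
  obtain ⟨A, hA, rfl⟩ := h
  refine ⟨A.reverse, by simpa [List.map_reverse] using hA, ?_⟩
  simp [Surface.invWord, List.map_reverse]

lemma IsDoubled.rotate_one {r : Word g} (h : IsDoubled r) : IsDoubled (r.rotate 1) := by
  obtain ⟨_ | ⟨a, A⟩, hA, rfl⟩ := h
  · exact ⟨[], by simp, by simp⟩
  refine ⟨A ++ [invLetter a], ?_, by simp⟩
  simpa [invLetter] using (List.nodup_rotate (n := 1)).mpr hA

lemma IsDoubled.rotate {r : Word g} (h : IsDoubled r) (n : ℕ) : IsDoubled (r.rotate n) := by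
  induction n with
  | zero => simpa using h
  | succ n ih => simpa [List.rotate_rotate] using ih.rotate_one

lemma isDoubled_of_mem_RSet {r : Word g} (hr : r ∈ RSet g) : IsDoubled r := by
  rcases hr with h | h <;> obtain ⟨n, rfl⟩ := h.symm
  · exact isDoubled_relWord.rotate n
  · exact isDoubled_relWord.invWord.rotate n

end Doubled

section Lex

variable {α : Type*} {r : α → α → Prop}

lemma lex_of_append_left [Std.Irrefl r] (p : List α) {l₁ l₂ : List α}
    (h : List.Lex r (p ++ l₁) (p ++ l₂)) : List.Lex r l₁ l₂ := by
  induction p with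
  | nil => exact h
  | cons a p ih => exact ih (List.lex_cons_iff.mp h)

lemma lex_of_append_right {l₁ l₂ : List α} (q : List α) (hlen : l₁.length = l₂.length)
    (h : List.Lex r (l₁ ++ q) (l₂ ++ q)) : l₁ = l₂ ∨ List.Lex r l₁ l₂ := by
  induction l₁ generalizing l₂ with
  | nil => exact .inl (List.length_eq_zero_iff.mp hlen.symm).symm
  | cons a l₁ ih =>
    obtain _ | ⟨b, l₂⟩ := l₂
    · simp at hlen
    cases h with
    | rel hab => exact .inr (.rel hab)
    | cons h => exact (ih (by simpa using hlen) h).imp (congrArg _) .cons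

end Lex

section Irred

variable {g : ℕ}

lemma rank_lt (a : Letter g) : rank a < 4 * g := by
  obtain ⟨⟨i, hi⟩, _ | _⟩ := a <;> simp only [rank, Bool.false_eq_true, ↓reduceIte] <;> omega

lemma rank_invLetter (a : Letter g) : rank (invLetter a) = 4 * g - 1 - rank a := by
  obtain ⟨⟨i, hi⟩, _ | _⟩ := a <;>
    simp only [rank, invLetter, Bool.not_false, Bool.not_true, Bool.false_eq_true, ↓reduceIte] <;>
    omega

lemma rank_invLetter_le_iff {a b : Letter g} :
    rank (invLetter a) ≤ rank (invLetter b) ↔ rank b ≤ rank a := by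
  have := rank_lt a
  have := rank_lt b
  rw [rank_invLetter, rank_invLetter]
  omega

lemma rank_injective : Function.Injective (rank (g := g)) := by
  rintro ⟨⟨i, hi⟩, _ | _⟩ ⟨⟨j, hj⟩, _ | _⟩ h <;>
    simp only [rank, Bool.false_eq_true, Bool.true_eq_false, ↓reduceIte, Prod.mk.injEq,
      Fin.mk.injEq, and_true, and_false, Nat.add_left_cancel_iff] at h ⊢ <;>
    omega

instance : Std.Irrefl (letterLt (g := g)) := ⟨fun a => lt_irrefl (rank a)⟩

lemma wordLe.length_le {w w' : Word g} (h : wordLe w w') : w.length ≤ w'.length := by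
  rcases h with rfl | h | ⟨h, -⟩ <;> omega

lemma wordLe_of_append_left (p : Word g) {w w' : Word g} (h : wordLe (p ++ w) (p ++ w')) :
    wordLe w w' := by
  rcases h with h | h | ⟨hlen, hlex⟩
  · exact .inl (List.append_cancel_left h)
  · exact .inr (.inl (by simpa using h))
  · exact .inr (.inr ⟨by simpa using hlen, lex_of_append_left p hlex⟩)

lemma wordLe_of_append_right (q : Word g) {w w' : Word g} (h : wordLe (w ++ q) (w' ++ q)) :
    wordLe w w' := by
  rcases h with h | h | ⟨hlen, hlex⟩
  · exact .inl (List.append_cancel_right h)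
  · exact .inr (.inl (by simpa using h))
  · have hlen' : w.length = w'.length := by simpa using hlen
    exact (lex_of_append_right q hlen' hlex).imp id fun h => .inr ⟨hlen', h⟩

lemma Irred.of_append_left {p w : Word g} (h : Irred (p ++ w)) : Irred w :=
  ⟨rfl, fun w' hw' => wordLe_of_append_left p (h.2 _ (by simp [hw']))⟩

lemma Irred.of_append_right {w q : Word g} (h : Irred (w ++ q)) : Irred w :=
  ⟨rfl, fun w' hw' => wordLe_of_append_right q (h.2 _ (by simp [hw']))⟩

lemma Irred.drop {w : Word g} (h : Irred w) (i : ℕ) : Irred (w.drop i) :=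
  Irred.of_append_left (p := w.take i) (by rwa [List.take_append_drop])

lemma Irred.take {w : Word g} (h : Irred w) (i : ℕ) : Irred (w.take i) :=
  Irred.of_append_right (q := w.drop i) (by rwa [List.take_append_drop])

lemma Irred.length_le {w w' : Word g} (hw : Irred w) (h : eval w' = eval w) :
    w.length ≤ w'.length :=
  (hw.2 w' h).length_le

lemma Irred.rank_le_of_eval_cons_eq {a b : Letter g} {w w' : Word g} (hw : Irred (a :: w))
    (h : eval (b :: w') = eval (a :: w)) (hlen : w'.length = w.length) : rank a ≤ rank b := by
  rcases hw.2 _ h with h | h | ⟨-, h⟩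
  · exact (List.cons_eq_cons.mp h).1 ▸ le_rfl
  · simp [hlen] at h
  · cases h with
    | rel h => exact h.le
    | cons => exact le_rfl

end Irred

section Junction

variable {g : ℕ}

lemma eq_of_irred_of_irred_map_invLetter {a b : Letter g} {M : Word g}
    (hX : Irred (a :: (M ++ [b]))) (hY : Irred ((a :: (M ++ [b])).map invLetter))
    (h : eval (a :: (M ++ [b])) * eval ((a :: (M ++ [b])).map invLetter) = 1) : a = b := by
  set X := a :: (M ++ [b])
  have hXrev : eval X.reverse = eval X := by
    rw [← invWord_map_invLetter, eval_invWord, ← eq_inv_of_mul_eq_one_left h]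
  have hYrev : eval (X.map invLetter).reverse = eval (X.map invLetter) := by
    rw [← invWord, eval_invWord, ← eq_inv_of_mul_eq_one_right h]
  have hab : rank a ≤ rank b :=
    hX.rank_le_of_eval_cons_eq (w' := M.reverse ++ [a]) (by simpa [X] using hXrev) (by simp)
  have hba : rank (invLetter a) ≤ rank (invLetter b) :=
    hY.rank_le_of_eval_cons_eq (w' := (M.map invLetter).reverse ++ [invLetter a])
      (by simpa [X] using hYrev) (by simp)
  exact rank_injective (le_antisymm hab (rank_invLetter_le_iff.mp hba))

theorem eq_nil_of_irred_append_mem_RSet {X Y : Word g} (hX : Irred X) (hY : Irred Y)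
    (hr : X ++ Y ∈ RSet g) : X = [] := by
  have h1 : eval X * eval Y = 1 := by rw [← eval_append, eval_eq_one_of_mem_RSet hr]
  have hXY : X.length ≤ Y.length := by
    simpa [invWord] using hX.length_le (w' := invWord Y)
      (by rw [eval_invWord, ← eq_inv_of_mul_eq_one_left h1])
  have hYX : Y.length ≤ X.length := by
    simpa [invWord] using hY.length_le (w' := invWord X)
      (by rw [eval_invWord, ← eq_inv_of_mul_eq_one_right h1])
  obtain ⟨A, hA, hXYA⟩ := isDoubled_of_mem_RSet hr
  have hlen := length_of_mem_RSet hr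
  obtain ⟨hXA, rfl⟩ := List.append_inj hXYA
    (by
      have := congrArg List.length hXYA
      simp only [List.length_append, List.length_map] at this
      omega)
  subst hXA
  obtain _ | ⟨a, X⟩ := X
  · rfl
  obtain rfl | ⟨M, b, rfl⟩ := X.eq_nil_or_concat
  · have : 2 = 4 * g := by simpa using hlen
    omega
  rw [List.concat_eq_append] at hX hY h1 hA
  have hab := eq_of_irred_of_irred_map_invLetter hX hY h1
  subst hab
  simp at hA

end Junction

theorem no_relator_at_junction_general (g : ℕ) (U V : Word g) (hUirr : Irred U) (hVirr : Irred V) :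
    (∀ i j : ℕ, i < U.length → 1 ≤ j → j ≤ V.length →
        U.drop i ++ V.take j ∉ RSet g) ∧
      ∀ i j : ℕ, i < U.length → 1 ≤ j → j ≤ V.length →
        IsFracRel (U.drop i ++ V.take j) →
          (U.drop i ++ V.take j).length ≤ 4 * g - 1 := by
  have hjunction : ∀ i j : ℕ, i < U.length → U.drop i ++ V.take j ∉ RSet g := by
    intro i j hi hr
    have := eq_nil_of_irred_append_mem_RSet (hUirr.drop i) (hVirr.take j) hr
    rw [List.drop_eq_nil_iff] at this
    omega
  exact ⟨fun i j hi _ _ => hjunction i j hi,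
    fun i j hi _ _ hfrac => hfrac.length_le_of_notMem_RSet (hjunction i j hi)⟩

theorem no_relator_at_junction (g : ℕ) (hg : 2 ≤ g) (U V : Word g)
    (hU : U ≠ []) (hV : V ≠ []) (hUirr : Irred U) (hVirr : Irred V) :
    (∀ i j : ℕ, i < U.length → 1 ≤ j → j ≤ V.length →
        U.drop i ++ V.take j ∉ RSet g) ∧
      ∀ i j : ℕ, i < U.length → 1 ≤ j → j ≤ V.length →
        IsFracRel (U.drop i ++ V.take j) →
          (U.drop i ++ V.take j).length ≤ 4 * g - 1 :=
  no_relator_at_junction_general g U V hUirr hVirr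

end Surface
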